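/- Border-vertex discovery lemma: Suppose u ∈ A_σ receives pathlets π₁ = ⟨FID₁, v₁, w₁, σ₁ ∘ (l), δ₁⟩ and π₂ = ⟨FID₂, v₂, w₂, σ₂ ∘ (⊥), ∅⟩ with σ₁, σ₂ nonempty, (v₁,w₁) ≠ (v₂,w₂) as ordered endpoint pairs, σ₂ ⊏ σ = σ₁, and there is a vertex v that is an endpoint of both π₁ and π₂. Assume scope stacks are assigned per the control plane rules (atomic pathlets ⟨·, a, b, (S(a) ⋈ S(b)) ∘ (⊥), ·⟩ with (a,b) ∈ E; crossing/final pathlets for A_τ have scope stack τ with both endpoints in A_τ). Then v is a border vertex for A_σ. -/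
import Mathlib


def lcp {L : Type} [DecidableEq L] : List L → List L → List L
  | a :: as, b :: bs => if a = b then a :: lcp as bs else []
  | _, _ => []

def SPrefix {L : Type} (σ₁ σ₂ : List L) : Prop := ∃ τ : List L, τ ≠ [] ∧ σ₂ = σ₁ ++ τ

def area {V L : Type} (S : V → List L) (σ : List L) : Set V := {v | σ <+: S v}

/-- A pathlet: ⟨FID, start vertex, end vertex, scope stack, destinations⟩. -/
structure Pathlet (V L : Type) where
  fid : ℕ
  src : V
  dst : V
  scope : List L
  dests : Set ℕ

/-- Atomic pathlet: endpoints adjacent, scope stack `(S(src) ⋈ S(dst)) ∘ (⊥)`. -/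
def AtomicPathlet {V L : Type} [DecidableEq L] (G : SimpleGraph V) (S : V → List L)
    (bot : L) (π : Pathlet V L) : Prop :=
  G.Adj π.src π.dst ∧ π.scope = lcp (S π.src) (S π.dst) ++ [bot]

/-- Crossing/final pathlet for area `A_τ`: scope stack `τ` does not end in `⊥`
and both endpoints are in `A_τ`. -/
def IsCrossingOrFinal {V L : Type} (S : V → List L) (bot : L)
    (π : Pathlet V L) : Prop :=
  (∀ t : List L, π.scope ≠ t ++ [bot]) ∧
    π.src ∈ area S π.scope ∧ π.dst ∈ area S π.scope

/-- Scope stacks assigned per the control plane rules. -/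
def ValidPathlet {V L : Type} [DecidableEq L] (G : SimpleGraph V)
    (S : V → List L) (bot : L) (π : Pathlet V L) : Prop :=
  AtomicPathlet G S bot π ∨ IsCrossingOrFinal S bot π

theorem lcp_prefix_left {L : Type} [DecidableEq L] :
    ∀ a b : List L, lcp a b <+: a
  | [], _ => by simp [lcp]
  | _ :: _, [] => by simp [lcp]
  | a :: as, b :: bs => by
    by_cases h : a = b
    · simpa [lcp, h] using lcp_prefix_left as bs
    · simp [lcp, h]

theorem lcp_prefix_right {L : Type} [DecidableEq L] :
    ∀ a b : List L, lcp a b <+: b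
  | [], _ => by simp [lcp]
  | _ :: _, [] => by simp [lcp]
  | a :: as, b :: bs => by
    by_cases h : a = b
    · simpa [lcp, h] using lcp_prefix_right as bs
    · simp [lcp, h]

theorem prefix_lcp {L : Type} [DecidableEq L] :
    ∀ c a b : List L, c <+: a → c <+: b → c <+: lcp a b
  | [], _, _, _, _ => by simp
  | x :: cs, a, b, ha, hb => by
    obtain ⟨ta, rfl⟩ := ha
    obtain ⟨tb, hb'⟩ := hb
    cases b with
    | nil => simp at hb'
    | cons y bs =>
      simp only [List.cons_append, List.cons.injEq] at hb'
      obtain ⟨rfl, hb2⟩ := hb'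
      simp only [List.cons_append, lcp, if_pos rfl]
      obtain ⟨t, ht⟩ := prefix_lcp cs (cs ++ ta) bs ⟨ta, rfl⟩ ⟨tb, hb2⟩
      exact ⟨t, by simp [ht]⟩

/-- Border-vertex discovery lemma. -/
theorem discover_border_vertex {V L : Type} [DecidableEq L]
    (G : SimpleGraph V) (S : V → List L) (bot : L)
    (π₁ π₂ : Pathlet V L)
    (h₁ : ValidPathlet G S bot π₁) (h₂ : ValidPathlet G S bot π₂)
    (σ₁ σ₂ : List L) (l : L)
    (hs₁ : π₁.scope = σ₁ ++ [l]) (hs₂ : π₂.scope = σ₂ ++ [bot])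
    (hδ₂ : π₂.dests = ∅)
    (hσ₁ : σ₁ ≠ []) (hσ₂ : σ₂ ≠ [])
    (hdiff : (π₁.src, π₁.dst) ≠ (π₂.src, π₂.dst))
    (hstrict : SPrefix σ₂ σ₁)
    (u : V) (hu : u ∈ area S σ₁)
    (v : V) (hv₁ : v = π₁.src ∨ v = π₁.dst) (hv₂ : v = π₂.src ∨ v = π₂.dst) :
    v ∈ area S σ₁ ∧ ∃ w : V, G.Adj v w ∧ w ∉ area S σ₁ := by
  -- π₂ cannot be crossing/final since its scope ends in bot
  have h₂a : AtomicPathlet G S bot π₂ := by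
    rcases h₂ with h | h
    · exact h
    · exact absurd hs₂ (h.1 σ₂)
  obtain ⟨hadj₂, hsc₂⟩ := h₂a
  have hlcp₂ : lcp (S π₂.src) (S π₂.dst) = σ₂ := by
    have h := hsc₂.symm.trans hs₂
    exact List.append_left_injective [bot] h
  obtain ⟨τ, hτ, hστ⟩ := hstrict
  -- v ∈ area S σ₁
  have hvin : v ∈ area S σ₁ := by
    rcases h₁ with ⟨_, hsc₁⟩ | ⟨_, hsrc, hdst⟩
    · -- atomic: σ₁ = lcp(S src)(S dst)
      have h1 := hs₁.symm.trans hsc₁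
      have hσeq : σ₁ = lcp (S π₁.src) (S π₁.dst) := (List.append_inj' h1 rfl).1
      rcases hv₁ with rfl | rfl
      · exact hσeq ▸ lcp_prefix_left _ _
      · exact hσeq ▸ lcp_prefix_right _ _
    · have hsub : ∀ x, x ∈ area S π₁.scope → x ∈ area S σ₁ := by
        intro x hx
        have : σ₁ ++ [l] <+: S x := hs₁ ▸ hx
        exact ((σ₁.prefix_append [l]).trans this)
      rcases hv₁ with rfl | rfl
      · exact hsub _ hsrc
      · exact hsub _ hdst
  refine ⟨hvin, ?_⟩
  -- the other endpoint of π₂ is outside area S σ₁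
  have hout : ∀ x y : V, x = π₂.src ∧ y = π₂.dst ∨ x = π₂.dst ∧ y = π₂.src →
      x ∈ area S σ₁ → y ∉ area S σ₁ := by
    rintro x y h hx hy
    have hs : σ₁ <+: S π₂.src ∧ σ₁ <+: S π₂.dst := by
      rcases h with ⟨rfl, rfl⟩ | ⟨rfl, rfl⟩
      · exact ⟨hx, hy⟩
      · exact ⟨hy, hx⟩
    have : σ₁ <+: σ₂ := hlcp₂ ▸ prefix_lcp σ₁ _ _ hs.1 hs.2
    have hlen := this.length_le
    rw [hστ] at hlen
    simp only [List.length_append] at hlen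
    have hτ0 : τ.length = 0 := by omega
    exact hτ (List.length_eq_zero_iff.mp hτ0)
  rcases hv₂ with rfl | rfl
  · exact ⟨π₂.dst, hadj₂, hout _ _ (Or.inl ⟨rfl, rfl⟩) hvin⟩
  · exact ⟨π₂.src, hadj₂.symm, hout _ _ (Or.inr ⟨rfl, rfl⟩) hvin⟩
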